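/- For every a > 0, the integral over θ ∈ [−π, π] of min{1, (|sin θ|/a)^2} / sin²θ dθ is bounded by a universal constant times 1/(a(1+a)). -/

import Mathlib

/-!
Where `sin θ ≠ 0` the integrand is `min (1 / sin² θ) (1 / a²) ≤ 2 / (a² + sin² θ)`. This majorant
has period `π`, so its integral over `[-π, π]` is twice the one over `[-π/2, π/2]`, where Jordan's
inequality `|sin θ| ≥ 2|θ|/π` bounds it by `2 / (a² + (2θ/π)²)`. That integral is
`(2π/a) · arctan (1/a)`, and `arctan (1/a) ≤ min (π/2) (1/a) ≤ π / (1 + a)`.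
-/

open Real

namespace Real

theorem arctan_le_self {x : ℝ} (hx : 0 ≤ x) : arctan x ≤ x := by
  simpa only [tan_arctan] using le_tan (arctan_nonneg.2 hx) (arctan_lt_pi_div_two x)

theorem arctan_inv_le_pi_div_one_add {a : ℝ} (ha : 0 < a) : arctan a⁻¹ ≤ π / (1 + a) := by
  rcases le_total a 1 with ha1 | ha1
  · refine (arctan_lt_pi_div_two _).le.trans ?_
    rw [div_le_div_iff₀ two_pos (by linarith)]
    nlinarith [pi_pos]
  · refine (arctan_le_self (inv_nonneg.2 ha.le)).trans ?_
    rw [inv_eq_one_div, div_le_div_iff₀ ha (by linarith)]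
    nlinarith [pi_gt_three]

theorem sq_two_div_pi_mul_le_sin_sq {θ : ℝ} (hθ : |θ| ≤ π / 2) :
    (2 / π * θ) ^ 2 ≤ sin θ ^ 2 := by
  rw [sq_le_sq, abs_mul, abs_of_pos (by positivity : (0 : ℝ) < 2 / π)]
  exact mul_abs_le_abs_sin hθ

end Real

theorem min_one_div_sq_le_two_div_sq_add_sq (a s : ℝ) :
    min 1 ((|s| / a) ^ 2) / s ^ 2 ≤ 2 / (a ^ 2 + s ^ 2) := by
  rcases eq_or_ne s 0 with rfl | hs
  · simp only [ne_eq, OfNat.ofNat_ne_zero, not_false_eq_true, zero_pow, div_zero]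
    positivity
  rcases eq_or_ne a 0 with rfl | ha
  · simp only [div_zero, ne_eq, OfNat.ofNat_ne_zero, not_false_eq_true, zero_pow,
      min_eq_right zero_le_one, zero_div]
    positivity
  have hs2 : 0 < s ^ 2 := by positivity
  have ha2 : 0 < a ^ 2 := by positivity
  rcases le_total (s ^ 2) (a ^ 2) with hsa | has
  · calc min 1 ((|s| / a) ^ 2) / s ^ 2 ≤ (|s| / a) ^ 2 / s ^ 2 := by
          gcongr; exact min_le_right _ _
      _ = 1 / a ^ 2 := by rw [div_pow, sq_abs]; field_simp
      _ ≤ 2 / (a ^ 2 + s ^ 2) := by rw [div_le_div_iff₀ ha2 (by positivity)]; linarith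
  · calc min 1 ((|s| / a) ^ 2) / s ^ 2 ≤ 1 / s ^ 2 := by gcongr; exact min_le_left _ _
      _ ≤ 2 / (a ^ 2 + s ^ 2) := by rw [div_le_div_iff₀ hs2 (by positivity)]; linarith

theorem Function.Periodic.intervalIntegral_neg_self_eq_two_mul {f : ℝ → ℝ} {T : ℝ}
    (hf : Function.Periodic f T)
    (hint : ∀ t₁ t₂, IntervalIntegrable f MeasureTheory.volume t₁ t₂) :
    ∫ x in (-T)..T, f x = 2 * ∫ x in (-(T / 2))..(T / 2), f x := by
  have htwo := hf.intervalIntegral_add_zsmul_eq 2 (-T) hint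
  have hshift := hf.intervalIntegral_add_eq (-T) (-(T / 2))
  rw [show -T + (2 : ℤ) • T = T by simp; ring] at htwo
  rw [show -(T / 2) + T = T / 2 by ring] at hshift
  rw [htwo, hshift, zsmul_eq_mul, Int.cast_ofNat]

theorem integral_two_div_sq_add_two_div_pi_mul_sq {a : ℝ} (ha : 0 < a) :
    ∫ θ in (-(π / 2))..(π / 2), 2 / (a ^ 2 + (2 / π * θ) ^ 2) = 2 * π / a * arctan a⁻¹ := by
  have hpi := pi_pos
  set c := π * a / 2
  have hc : c ≠ 0 := by positivity
  have hrw : ∀ θ : ℝ, 2 / (a ^ 2 + (2 / π * θ) ^ 2) = π / a * (c / (c ^ 2 + θ ^ 2)) := by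
    intro θ
    simp only [c]
    field_simp
  simp_rw [hrw]
  rw [intervalIntegral.integral_const_mul, integral_div_sq_add_sq, neg_div, arctan_neg]
  simp only [c]
  field_simp
  norm_num

/-- For every `a > 0`, `∫_{-π}^{π} min{1, (|sin θ|/a)^2} / sin² θ dθ ≪ 1/(a(1+a))`
with a universal implied constant. -/
theorem theta_integral_bound_two :
    ∃ C : ℝ, 0 < C ∧ ∀ a : ℝ, 0 < a →
      ∫ θ in (-π)..π, min 1 ((|Real.sin θ| / a) ^ 2) / (Real.sin θ) ^ 2
        ≤ C * (1 / (a * (1 + a))) := by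
  refine ⟨4 * π ^ 2, by positivity, fun a ha => ?_⟩
  have hpi := pi_pos
  set g : ℝ → ℝ := fun θ => 2 / (a ^ 2 + sin θ ^ 2)
  have hg : Continuous g := continuous_const.div (by fun_prop) fun θ => by positivity
  have hg_per : Function.Periodic g π := fun θ => by simp only [g, sin_add_pi, neg_sq]
  calc ∫ θ in (-π)..π, min 1 ((|sin θ| / a) ^ 2) / sin θ ^ 2
      ≤ ∫ θ in (-π)..π, g θ := by
        rw [intervalIntegral.integral_of_le (by linarith),
          intervalIntegral.integral_of_le (by linarith)]
        exact MeasureTheory.integral_mono_of_nonneg (.of_forall fun θ => by positivity)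
          (hg.intervalIntegrable _ _).1
          (.of_forall fun θ => min_one_div_sq_le_two_div_sq_add_sq a (sin θ))
    _ = 2 * ∫ θ in (-(π / 2))..(π / 2), g θ :=
        hg_per.intervalIntegral_neg_self_eq_two_mul fun _ _ => hg.intervalIntegrable _ _
    _ ≤ 2 * ∫ θ in (-(π / 2))..(π / 2), 2 / (a ^ 2 + (2 / π * θ) ^ 2) := by
        gcongr
        refine intervalIntegral.integral_mono_on (by linarith) (hg.intervalIntegrable _ _)
          ((continuous_const.div (by fun_prop) fun θ => by positivity).intervalIntegrable _ _)
          fun θ hθ => ?_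
        have := sq_two_div_pi_mul_le_sin_sq (abs_le.2 hθ)
        simp only [g]
        gcongr
    _ = 4 * π / a * arctan a⁻¹ := by
        rw [integral_two_div_sq_add_two_div_pi_mul_sq ha]; ring
    _ ≤ 4 * π / a * (π / (1 + a)) := by gcongr; exact arctan_inv_le_pi_div_one_add ha
    _ = 4 * π ^ 2 * (1 / (a * (1 + a))) := by field_simp
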